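/- arXiv:2011.05169 — 3 statements merged into one kernel-verified Lean document; each statement's English description precedes it below -/
import Mathlib

section
/- Let G=(V,E) be a connected multigraph that is not a bipartite graph. Define deg(i)=|E(i)| (the number of neighbors of i, including i itself if i has a self-loop) and |E|=Σ_{i∈V} deg(i) (equal to the number of ordered pairs in E, each non-loop edge counted twice and each loop once). Then the probability measure μ_deg given by μ_deg(i)=deg(i)/|E| belongs to Ncond(G). -/
open scoped BigOperators

attribute [local instance] Classical.propDecidable

/-- A multigraph on the vertex set `V`: a symmetric binary relation on `V`,
possibly with self-loops. -/
structure Multigraph (V : Type*) where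
  Adj : V → V → Prop
  symm : ∀ u v, Adj u v → Adj v u

namespace Multigraph

variable {V : Type*}

/-- The neighborhood `E(U)` of a set `U` of vertices. -/
def nbhd (G : Multigraph V) (U : Set V) : Set V :=
  {v | ∃ u ∈ U, G.Adj u v}

/-- `V₁`, the set of self-looped vertices. -/
def loopSet (G : Multigraph V) : Set V := {v | G.Adj v v}

/-- `V₂`, the set of non-self-looped vertices. -/
def nonloopSet (G : Multigraph V) : Set V := {v | ¬ G.Adj v v}

/-- The maximal subgraph `Ǧ`, obtained by deleting all self-loops. -/
def check (G : Multigraph V) : Multigraph V where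
  Adj u v := G.Adj u v ∧ u ≠ v
  symm u v h := ⟨G.symm u v h.1, h.2.symm⟩

/-- An independent set: a nonempty set of pairwise non-adjacent vertices. -/
def IsIndep (G : Multigraph V) (I : Set V) : Prop :=
  I.Nonempty ∧ ∀ i ∈ I, ∀ j ∈ I, ¬ G.Adj i j

/-- Connectivity of a multigraph: any two nodes are joined by a path of edges. -/
def Connected (G : Multigraph V) : Prop :=
  ∀ u v : V, Relation.ReflTransGen G.Adj u v

/-- `G` is a bipartite graph: its vertex set splits into two parts such that every
edge joins the two parts (in particular, `G` has no self-loop). -/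
def IsBipartiteGraph (G : Multigraph V) : Prop :=
  ∃ A B : Set V, (∀ v, v ∈ A ∨ v ∈ B) ∧ (∀ v, ¬(v ∈ A ∧ v ∈ B)) ∧
    ∀ u v, G.Adj u v → (u ∈ A ∧ v ∈ B) ∨ (u ∈ B ∧ v ∈ A)

section Meas

variable [Fintype V]

/-- Total mass `μ(S)` of a set of vertices. -/
noncomputable def mass (μ : V → ℝ) (S : Set V) : ℝ := ∑ v, S.indicator μ v

/-- `μ ∈ ℳ(V)`: a probability measure with full support on `V`. -/
def FullSupport (μ : V → ℝ) : Prop := (∀ v, 0 < μ v) ∧ ∑ v, μ v = 1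

/-- The stability condition `Ncond(G)`: fully supported probability measures `μ` such
that `μ(I) < μ(E(I))` for every independent set `I` of `G`. -/
def Ncond (G : Multigraph V) (μ : V → ℝ) : Prop :=
  FullSupport μ ∧ ∀ I : Set V, G.IsIndep I → mass μ I < mass μ (G.nbhd I)

/-- The degree of a vertex: its number of neighbors (including itself if self-looped). -/
noncomputable def deg (G : Multigraph V) (i : V) : ℕ := (G.nbhd {i}).ncard

end Meas
end Multigraph

/-!
Double counting the edges leaving an independent set `I` gives
`∑_{i ∈ I} deg i = ∑_{v ∈ E(I)} |E(v) ∩ I| ≤ ∑_{v ∈ E(I)} deg v`. Equality would mean that no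
vertex of `E(I)` has a neighbour outside `I`; then `I ∪ E(I)` is closed under adjacency, hence
everything by connectedness, and `I`, `E(I)` form a bipartition of `G`.
-/

open Finset

namespace Multigraph

variable {V : Type*} (G : Multigraph V)

theorem mem_of_connected (hconn : G.Connected) {S : Set V} {u : V} (hu : u ∈ S)
    (hS : ∀ a b, a ∈ S → G.Adj a b → b ∈ S) (v : V) : v ∈ S := by
  induction hconn u v with
  | refl => exact hu
  | tail _ hab ih => exact hS _ _ ih hab

theorem isBipartiteGraph_of_adj_nbhd_mem (hconn : G.Connected) {I : Set V} (hI : G.IsIndep I)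
    (hclosed : ∀ v ∈ G.nbhd I, ∀ w, G.Adj v w → w ∈ I) : G.IsBipartiteGraph := by
  obtain ⟨i₀, hi₀⟩ := hI.1
  have hcover : ∀ u, u ∈ I ∪ G.nbhd I :=
    G.mem_of_connected hconn (Or.inl hi₀) fun a b ha hab =>
      ha.elim (fun ha => Or.inr ⟨a, ha, hab⟩) (fun ha => Or.inl (hclosed a ha b hab))
  refine ⟨I, G.nbhd I, hcover, ?_, fun u v huv => ?_⟩
  · rintro v ⟨hv, u, hu, huv⟩
    exact hI.2 u hu v hv huv
  · rcases hcover u with hu | hu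
    · exact Or.inl ⟨hu, u, hu, huv⟩
    · exact Or.inr ⟨hu, hclosed u hu v huv⟩

theorem exists_adj_nbhd_not_mem (hconn : G.Connected) (hnb : ¬ G.IsBipartiteGraph) {I : Set V}
    (hI : G.IsIndep I) : ∃ v ∈ G.nbhd I, ∃ w, G.Adj v w ∧ w ∉ I := by
  by_contra! h
  exact hnb (G.isBipartiteGraph_of_adj_nbhd_mem hconn hI h)

theorem exists_adj (hconn : G.Connected) (hnb : ¬ G.IsBipartiteGraph) (v : V) :
    ∃ w, G.Adj v w := by
  by_contra! h
  have hI : G.IsIndep {v} := ⟨Set.singleton_nonempty v, by simp [h]⟩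
  obtain ⟨u, ⟨_, rfl, hvu⟩, -⟩ := G.exists_adj_nbhd_not_mem hconn hnb hI
  exact h u hvu

theorem nonempty_of_not_isBipartiteGraph (hnb : ¬ G.IsBipartiteGraph) : Nonempty V := by
  by_contra h
  rw [not_nonempty_iff] at h
  exact hnb ⟨∅, ∅, isEmptyElim, isEmptyElim, isEmptyElim⟩

section Fintype

variable [Fintype V]

theorem mass_eq_sum (μ : V → ℝ) (S : Set V) : mass μ S = ∑ v ∈ S.toFinset, μ v := by
  rw [mass, sum_indicator_eq_sum_filter]
  congr 1
  ext
  simp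

theorem deg_eq_card_filter (v : V) : G.deg v = #(univ.filter (G.Adj v)) := by
  rw [deg, Set.ncard_eq_toFinset_card']
  congr 1
  ext
  rw [Set.mem_toFinset]
  simp [nbhd]

theorem card_filter_adj_le_deg (t : Finset V) (v : V) : #(t.filter (G.Adj v)) ≤ G.deg v := by
  rw [deg_eq_card_filter]
  exact card_le_card (filter_subset_filter _ (subset_univ t))

theorem card_filter_adj_lt_deg {t : Finset V} {v w : V} (hvw : G.Adj v w) (hw : w ∉ t) :
    #(t.filter (G.Adj v)) < G.deg v := by
  rw [deg_eq_card_filter]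
  exact card_lt_card ⟨filter_subset_filter _ (subset_univ t),
    fun h => hw (mem_filter.1 (h (mem_filter.2 ⟨mem_univ w, hvw⟩))).1⟩

theorem deg_pos (hconn : G.Connected) (hnb : ¬ G.IsBipartiteGraph) (v : V) : 0 < G.deg v := by
  obtain ⟨w, hvw⟩ := G.exists_adj hconn hnb v
  simpa using G.card_filter_adj_lt_deg hvw (notMem_empty w)

theorem sum_deg_eq_sum_card_filter_adj (I : Set V) :
    ∑ i ∈ I.toFinset, G.deg i = ∑ v ∈ (G.nbhd I).toFinset, #(I.toFinset.filter (G.Adj v)) := by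
  have hcount := sum_card_bipartiteAbove_eq_sum_card_bipartiteBelow
    (s := I.toFinset) (t := (G.nbhd I).toFinset) (r := G.Adj)
  simp only [bipartiteAbove, bipartiteBelow] at hcount
  convert hcount using 2 with i hi v
  · rw [deg_eq_card_filter]
    congr 1
    ext w
    simp only [mem_filter, mem_univ, true_and, Set.mem_toFinset, iff_and_self]
    exact fun hiw => ⟨i, Set.mem_toFinset.1 hi, hiw⟩
  · exact congrArg card (filter_congr fun u _ => ⟨G.symm v u, G.symm u v⟩)

theorem sum_deg_lt_sum_deg_nbhd {I : Set V} (h : ∃ v ∈ G.nbhd I, ∃ w, G.Adj v w ∧ w ∉ I) :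
    ∑ i ∈ I.toFinset, G.deg i < ∑ v ∈ (G.nbhd I).toFinset, G.deg v := by
  obtain ⟨v₀, hv₀, w₀, hvw₀, hw₀⟩ := h
  rw [sum_deg_eq_sum_card_filter_adj]
  exact sum_lt_sum (fun v _ => G.card_filter_adj_le_deg _ v)
    ⟨v₀, Set.mem_toFinset.2 hv₀, G.card_filter_adj_lt_deg hvw₀ (by simpa using hw₀)⟩

end Fintype

end Multigraph

open Multigraph
/-- For any connected multigraph `G` that is not a bipartite graph,
the probability measure `μ_deg(i) = deg(i)/|E|`, where `|E| = Σ_i deg(i)`, belongs to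
`Ncond(G)`. -/
theorem mudeg_mem_ncond {V : Type*} [Fintype V] (G : Multigraph V)
    (hconn : G.Connected) (hnb : ¬ G.IsBipartiteGraph) :
    Ncond G (fun i => (G.deg i : ℝ) / ∑ j : V, (G.deg j : ℝ)) := by
  have := G.nonempty_of_not_isBipartiteGraph hnb
  have hdeg (i : V) : (0 : ℝ) < G.deg i := by exact_mod_cast G.deg_pos hconn hnb i
  have hsum : 0 < ∑ j : V, (G.deg j : ℝ) := sum_pos (fun i _ => hdeg i) univ_nonempty
  refine ⟨⟨fun i => div_pos (hdeg i) hsum, by rw [← sum_div, div_self hsum.ne']⟩, fun I hI => ?_⟩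
  rw [mass_eq_sum, mass_eq_sum, ← sum_div, ← sum_div]
  gcongr
  exact_mod_cast G.sum_deg_lt_sum_deg_nbhd (G.exists_adj_nbhd_not_mem hconn hnb hI)
end

section
/- For any connected multigraph G=(V,E) and any admissible matching policy Φ, stab(G,Φ) ⊆ Ncond(G): if the Markov chain (W_n) of the model (G,Φ,μ) is positive recurrent, then μ(I) < μ(E(I)) for every independent set I of G. -/
open scoped BigOperators

attribute [local instance] Classical.propDecidable

namespace Multigraph

variable {V : Type*}

section Chain

variable [DecidableEq V]

/-- The state space `𝕎` of admissible queue details. -/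
def WSpace (G : Multigraph V) : Set (List V) :=
  {w | (∀ i j : V, i ≠ j → G.Adj i j → w.count i = 0 ∨ w.count j = 0) ∧
    ∀ i : V, G.Adj i i → w.count i ≤ 1}

/-- An admissible matching policy: a (possibly random) transition rule which, in state
`w` upon the arrival of an item of class `v`, appends `v` when no compatible item is in
line, and otherwise deletes one stored item of a class compatible with `v`. -/
structure Policy (G : Multigraph V) where
  next : List V → V → List V → ℝ
  nonneg : ∀ w v w', 0 ≤ next w v w'
  total : ∀ w ∈ WSpace G, ∀ v : V, (∑' w' : List V, next w v w') = 1
  noMatch : ∀ w ∈ WSpace G, ∀ v : V, (∀ a ∈ w, ¬ G.Adj a v) → next w v (w ++ [v]) = 1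
  matchRule : ∀ w ∈ WSpace G, ∀ v : V, (∃ a ∈ w, G.Adj a v) → ∀ w' : List V,
    next w v w' ≠ 0 → ∃ k : Fin w.length, G.Adj (w.get k) v ∧ w' = w.eraseIdx k

/-- The transition kernel of the buffer-content Markov chain of the model `(G,Φ,μ)`. -/
noncomputable def kernel [Fintype V] (G : Multigraph V) (pol : Policy G) (μ : V → ℝ)
    (w w' : List V) : ℝ :=
  ∑ v : V, μ v * pol.next w v w'

/-- Irreducibility (on the state space `𝕎`) of a transition kernel. -/
def Irreducible (G : Multigraph V) (P : List V → List V → ℝ) : Prop :=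
  ∀ w ∈ WSpace G, ∀ w' ∈ WSpace G, Relation.ReflTransGen (fun a b => 0 < P a b) w w'

/-- A stationary probability distribution, supported on `𝕎`, for a transition kernel. -/
def IsStationary (G : Multigraph V) (P : List V → List V → ℝ) (π : List V → ℝ) :
    Prop :=
  (∀ w, 0 ≤ π w) ∧ (∀ w ∉ WSpace G, π w = 0) ∧ (∑' w : List V, π w) = 1 ∧
    ∀ w' : List V, (∑' w : List V, π w * P w w') = π w'

/-- Positive recurrence of the chain: irreducibility together with the existence of a
stationary probability distribution. -/
def PositiveRecurrent (G : Multigraph V) (P : List V → List V → ℝ) : Prop :=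
  Irreducible G P ∧ ∃ π : List V → ℝ, IsStationary G P π

end Chain
end Multigraph

open Multigraph

/-!
Fix an independent set `I` and give each class `v` the charge `χ(v) = 1_I(v) - 1_{E(I)}(v)`;
the potential of a queue is the total charge of its items. Adjacent classes have total charge
`≤ 0`, so whatever the policy does, an arrival of class `v` raises the potential by at least
`χ(v)`. For a stationary law `π`, the tails `T(k) = π(potential ≥ k)` therefore satisfy
`T(k+1) ≥ ∑ᵥ μ(v) T(k+1-χ(v))`, i.e. `μ(I) (T(k) - T(k+1)) ≤ μ(E(I)) (T(k+1) - T(k+2))`.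
If `μ(E(I)) ≤ μ(I)`, the decrements of the bounded function `T` are nondecreasing, which forces
them to vanish; but `T(k) - T(k+1) ≥ π(w) > 0` when `k` is the potential of a state `w` charged
by `π`.
-/

section TailMass

variable {α : Type*} {π : α → ℝ}

noncomputable def tailMass (π : α → ℝ) (f : α → ℤ) (k : ℤ) : ℝ :=
  ∑' w, {w | k ≤ f w}.indicator π w

variable (f : α → ℤ)

theorem tailMass_nonneg (hπ0 : ∀ w, 0 ≤ π w) (k : ℤ) : 0 ≤ tailMass π f k :=
  tsum_nonneg (Set.indicator_nonneg fun w _ => hπ0 w)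

theorem tailMass_le_tsum (hπ0 : ∀ w, 0 ≤ π w) (hπ : Summable π) (k : ℤ) :
    tailMass π f k ≤ ∑' w, π w :=
  (hπ.indicator _).tsum_le_tsum (Set.indicator_le_self' fun w _ => hπ0 w) hπ

theorem tailMass_antitone (hπ0 : ∀ w, 0 ≤ π w) (hπ : Summable π) :
    Antitone (tailMass π f) := fun _ k hjk =>
  (hπ.indicator _).tsum_le_tsum
    (Set.indicator_le_indicator_of_subset (fun w (hw : k ≤ f w) => hjk.trans hw)
      fun w => hπ0 w) (hπ.indicator _)

theorem le_tailMass_sub_tailMass_succ (hπ0 : ∀ w, 0 ≤ π w) (hπ : Summable π) (w : α) :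
    π w ≤ tailMass π f (f w) - tailMass π f (f w + 1) := by
  have hsub : {w' | f w + 1 ≤ f w'} ⊆ {w' | f w ≤ f w'} := fun w' (h : f w + 1 ≤ f w') =>
    show f w ≤ f w' by omega
  have hnn : ∀ w',
      0 ≤ {w' | f w ≤ f w'}.indicator π w' - {w' | f w + 1 ≤ f w'}.indicator π w' :=
    fun w' => sub_nonneg.2 (Set.indicator_le_indicator_of_subset hsub (fun _ => hπ0 _) w')
  rw [tailMass, tailMass, ← (hπ.indicator _).tsum_sub (hπ.indicator _)]
  refine le_of_eq_of_le ?_ (((hπ.indicator _).sub (hπ.indicator _)).le_tsum w fun w' _ => hnn w')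
  simp

end TailMass

theorem monotone_sub_succ_of_mul_le_mul {T : ℤ → ℝ} {a b : ℝ} (ha : 0 < a) (hba : b ≤ a)
    (hT : Antitone T) (h : ∀ k, a * (T k - T (k + 1)) ≤ b * (T (k + 1) - T (k + 2))) :
    Monotone fun k => T k - T (k + 1) := by
  refine monotone_int_of_le_succ fun k => le_of_mul_le_mul_left ?_ ha
  rw [add_assoc, one_add_one_eq_two]
  have hd : 0 ≤ T (k + 1) - T (k + 2) := sub_nonneg.2 (hT (by omega))
  exact (h k).trans (mul_le_mul_of_nonneg_right hba hd)

theorem le_succ_of_monotone_sub_succ {T : ℤ → ℝ} {m M : ℝ}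
    (hd : Monotone fun k => T k - T (k + 1)) (hm : ∀ j, m ≤ T j) (hM : ∀ j, T j ≤ M)
    (k : ℤ) : T k ≤ T (k + 1) := by
  by_contra! hk
  obtain ⟨N, hN⟩ := exists_nat_gt ((M - m) / (T k - T (k + 1)))
  have htelescope :
      ∑ n ∈ Finset.range N, (T (k + n) - T (k + (n + 1 : ℕ))) = T k - T (k + N) := by
    simpa using Finset.sum_range_sub' (fun n : ℕ => T (k + n)) N
  have hsum : N * (T k - T (k + 1)) ≤ T k - T (k + N) := by
    calc N * (T k - T (k + 1)) = ∑ n ∈ Finset.range N, (T k - T (k + 1)) := by simp [mul_sub]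
      _ ≤ ∑ n ∈ Finset.range N, (T (k + n) - T (k + (n + 1 : ℕ))) :=
        Finset.sum_le_sum fun (n : ℕ) _ => by
          simpa [add_assoc] using hd (show k ≤ k + n by omega)
      _ = T k - T (k + N) := htelescope
  rw [div_lt_iff₀ (sub_pos.2 hk)] at hN
  linarith [hm (k + N), hM k]

section Stationary

variable {α : Type*} {P : α → α → ℝ} {π : α → ℝ}

theorem hasSum_mul_tsum_indicator_of_stationary (hπ0 : ∀ w, 0 ≤ π w) (hπ : Summable π)
    (hP0 : ∀ w w', 0 ≤ P w w') (hP : ∀ w, π w ≠ 0 → HasSum (P w) 1)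
    (hstat : ∀ w', ∑' w, π w * P w w' = π w') (A : Set α) :
    HasSum (fun w => π w * ∑' w', A.indicator (P w) w') (∑' w', A.indicator π w') := by
  set F : α → α → ℝ := fun w w' => π w * A.indicator (P w) w'
  have hF0 : ∀ w w', 0 ≤ F w w' := fun w w' =>
    mul_nonneg (hπ0 w) (Set.indicator_nonneg (fun w' _ => hP0 w w') w')
  have hrow : ∀ w, Summable (F w) := by
    intro w
    by_cases hw : π w = 0
    · simp [F, hw]
    · exact ((hP w hw).summable.indicator A).mul_left (π w)
  have hrow_le : ∀ w, ∑' w', F w w' ≤ π w := by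
    intro w
    by_cases hw : π w = 0
    · simp [F, hw]
    · calc ∑' w', F w w' = π w * ∑' w', A.indicator (P w) w' := tsum_mul_left
        _ ≤ π w * 1 := by
          refine mul_le_mul_of_nonneg_left ?_ (hπ0 w)
          rw [← (hP w hw).tsum_eq]
          exact ((hP w hw).summable.indicator A).tsum_le_tsum
            (Set.indicator_le_self' fun w' _ => hP0 w w') (hP w hw).summable
        _ = π w := mul_one _
  have hrows : Summable fun w => ∑' w', F w w' :=
    hπ.of_nonneg_of_le (fun w => tsum_nonneg (hF0 w)) hrow_le
  have hcol : ∀ w', ∑' w, F w w' = A.indicator π w' := by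
    intro w'
    by_cases hw' : w' ∈ A
    · simp [F, Set.indicator_of_mem hw', hstat]
    · simp [F, Set.indicator_of_notMem hw']
  have hF : Summable (Function.uncurry F) :=
    (summable_prod_of_nonneg fun p => hF0 p.1 p.2).2 ⟨hrow, hrows⟩
  convert hrows.hasSum using 1
  · exact funext fun w => tsum_mul_left.symm
  · simp_rw [← hcol]
    exact hF.tsum_comm

end Stationary

namespace Multigraph

variable {V : Type*}

section Potential

variable (G : Multigraph V) (I : Set V)

noncomputable def charge (v : V) : ℤ :=
  (if v ∈ I then 1 else 0) - (if v ∈ G.nbhd I then 1 else 0)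

noncomputable def potential (w : List V) : ℤ := (w.map (G.charge I)).sum

variable {G I}

theorem IsIndep.disjoint_nbhd (hI : G.IsIndep I) : Disjoint I (G.nbhd I) :=
  Set.disjoint_left.2 fun v hv ⟨u, hu, huv⟩ => hI.2 u hu v hv huv

theorem charge_add_charge_nonpos (hI : G.IsIndep I) {u v : V} (huv : G.Adj u v) :
    G.charge I u + G.charge I v ≤ 0 := by
  have hu : u ∈ I → v ∈ G.nbhd I ∧ v ∉ I := fun hu =>
    ⟨⟨u, hu, huv⟩, fun hv => hI.2 u hu v hv huv⟩
  have hv : v ∈ I → u ∈ G.nbhd I ∧ u ∉ I := fun hv =>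
    ⟨⟨v, hv, G.symm u v huv⟩, fun hu => hI.2 u hu v hv huv⟩
  unfold charge
  split_ifs <;> simp_all

theorem potential_append (w : List V) (v : V) :
    G.potential I (w ++ [v]) = G.potential I w + G.charge I v := by
  simp [potential]

theorem potential_eq_charge_add_potential_eraseIdx {w : List V} {k : ℕ} (hk : k < w.length) :
    G.potential I w = G.charge I w[k] + G.potential I (w.eraseIdx k) := by
  have hperm : w.Perm (w[k] :: w.eraseIdx k) := by
    conv_lhs => rw [← List.insertIdx_eraseIdx_getElem hk]
    exact List.perm_insertIdx _ _ (by simp [List.length_eraseIdx, hk]; omega)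
  simp [potential, (hperm.map _).sum_eq]

end Potential

section Chain

variable [DecidableEq V] {G : Multigraph V} {I : Set V} {w : List V}

namespace Policy

variable (pol : Policy G)

theorem hasSum_next (hw : w ∈ WSpace G) (v : V) : HasSum (pol.next w v) 1 := by
  have hs : Summable (pol.next w v) := by
    by_contra h
    simpa [tsum_eq_zero_of_not_summable h] using pol.total w hw v
  simpa [pol.total w hw v] using hs.hasSum

theorem eq_append_of_next_ne_zero (hw : w ∈ WSpace G) {v : V} (hv : ∀ a ∈ w, ¬ G.Adj a v)
    {w' : List V} (h : pol.next w v w' ≠ 0) : w' = w ++ [v] := by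
  by_contra hne
  have hle := sum_le_hasSum {w ++ [v], w'} (fun _ _ => pol.nonneg _ _ _) (pol.hasSum_next hw v)
  rw [Finset.sum_pair (Ne.symm hne), pol.noMatch w hw v hv] at hle
  exact h (le_antisymm (by linarith) (pol.nonneg w v w'))

theorem potential_add_charge_le (hI : G.IsIndep I) (hw : w ∈ WSpace G) {v : V}
    {w' : List V} (h : pol.next w v w' ≠ 0) :
    G.potential I w + G.charge I v ≤ G.potential I w' := by
  by_cases hm : ∃ a ∈ w, G.Adj a v
  · obtain ⟨k, hadj, rfl⟩ := pol.matchRule w hw v hm w' h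
    rw [List.get_eq_getElem] at hadj
    rw [potential_eq_charge_add_potential_eraseIdx k.isLt]
    linarith [charge_add_charge_nonpos hI hadj]
  · push Not at hm
    rw [pol.eq_append_of_next_ne_zero hw hm h, potential_append]

theorem ite_le_tsum_indicator_next (hI : G.IsIndep I) (hw : w ∈ WSpace G) (v : V) (k : ℤ) :
    (if k ≤ G.potential I w + G.charge I v then 1 else 0) ≤
      ∑' w', {w' | k ≤ G.potential I w'}.indicator (pol.next w v) w' := by
  split_ifs with hk
  · have hsupp : Function.support (pol.next w v) ⊆ {w' | k ≤ G.potential I w'} := fun w' hw' =>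
      hk.trans (pol.potential_add_charge_le hI hw (Function.mem_support.1 hw'))
    rw [Set.indicator_eq_self.2 hsupp, (pol.hasSum_next hw v).tsum_eq]
  · exact tsum_nonneg (Set.indicator_nonneg fun w' _ => pol.nonneg w v w')

end Policy

variable [Fintype V] {pol : Policy G} {μ : V → ℝ}

theorem kernel_nonneg (hμ : ∀ v, 0 ≤ μ v) (w w' : List V) : 0 ≤ kernel G pol μ w w' :=
  Finset.sum_nonneg fun v _ => mul_nonneg (hμ v) (pol.nonneg w v w')

theorem hasSum_kernel (hμ : ∑ v, μ v = 1) (hw : w ∈ WSpace G) :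
    HasSum (kernel G pol μ w) 1 := by
  have h := hasSum_sum (s := Finset.univ) fun v _ => (pol.hasSum_next hw v).mul_left (μ v)
  simp only [mul_one, hμ] at h
  exact h

theorem sum_mul_ite_le_tsum_indicator_kernel (hμ : ∀ v, 0 ≤ μ v) (hI : G.IsIndep I)
    (hw : w ∈ WSpace G) (k : ℤ) :
    ∑ v, μ v * (if k ≤ G.potential I w + G.charge I v then 1 else 0) ≤
      ∑' w', {w' | k ≤ G.potential I w'}.indicator (kernel G pol μ w) w' := by
  set A := {w' | k ≤ G.potential I w'}
  have hA : A.indicator (kernel G pol μ w) =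
      fun w' => ∑ v, μ v * A.indicator (pol.next w v) w' := by
    funext w'
    simp only [kernel, Set.indicator_apply]
    split_ifs <;> simp
  rw [hA, Summable.tsum_finsetSum fun v _ =>
    ((pol.hasSum_next hw v).summable.indicator A).mul_left (μ v)]
  refine Finset.sum_le_sum fun v _ => ?_
  rw [tsum_mul_left]
  exact mul_le_mul_of_nonneg_left (pol.ite_le_tsum_indicator_next hI hw v k) (hμ v)

end Chain

theorem mass_pos [Fintype V] {μ : V → ℝ} (hμ : ∀ v, 0 < μ v) {S : Set V}
    (hS : S.Nonempty) : 0 < mass μ S := by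
  obtain ⟨v, hv⟩ := hS
  calc 0 < S.indicator μ v := by simpa [Set.indicator_of_mem hv] using hμ v
    _ ≤ mass μ S := Finset.single_le_sum
        (fun u _ => Set.indicator_nonneg (fun u _ => (hμ u).le) u) (Finset.mem_univ v)

theorem sum_mul_comp_charge [Fintype V] {G : Multigraph V} {I : Set V} (hI : G.IsIndep I)
    (μ : V → ℝ) (φ : ℤ → ℝ) :
    ∑ v, μ v * φ (G.charge I v) =
      (∑ v, μ v) * φ 0 + mass μ I * (φ 1 - φ 0) + mass μ (G.nbhd I) * (φ (-1) - φ 0) := by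
  simp only [mass, Finset.sum_mul, ← Finset.sum_add_distrib]
  refine Finset.sum_congr rfl fun v _ => ?_
  by_cases hvI : v ∈ I
  · have hvN : v ∉ G.nbhd I := hI.disjoint_nbhd.notMem_of_mem_left hvI
    simp only [charge, hvI, hvN, ↓reduceIte, Set.indicator_of_mem, Set.indicator_of_notMem,
      not_false_eq_true, sub_zero]
    ring
  · by_cases hvN : v ∈ G.nbhd I <;>
      simp only [charge, hvI, hvN, ↓reduceIte, Set.indicator_of_mem, Set.indicator_of_notMem,
        not_false_eq_true, zero_sub, sub_self] <;>
      ring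

namespace IsStationary

variable [DecidableEq V] {G : Multigraph V} {P : List V → List V → ℝ} {π : List V → ℝ}

theorem summable (hπ : IsStationary G P π) : Summable π := by
  by_contra h
  simpa [tsum_eq_zero_of_not_summable h] using hπ.2.2.1

theorem exists_pos (hπ : IsStationary G P π) : ∃ w, 0 < π w := by
  by_contra! h
  have hπ0 : π = 0 := funext fun w => le_antisymm (h w) (hπ.1 w)
  simpa [hπ0] using hπ.2.2.1

end IsStationary

theorem sum_mul_tailMass_le [Fintype V] [DecidableEq V] {G : Multigraph V} {pol : Policy G}
    {μ : V → ℝ} {π : List V → ℝ} {I : Set V} (hμ : FullSupport μ)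
    (hπ : IsStationary G (kernel G pol μ) π) (hI : G.IsIndep I) (k : ℤ) :
    ∑ v, μ v * tailMass π (G.potential I) (k - G.charge I v) ≤
      tailMass π (G.potential I) k := by
  have hP : ∀ w, π w ≠ 0 → HasSum (kernel G pol μ w) 1 := fun w hw =>
    hasSum_kernel hμ.2 (by_contra fun hW => hw (hπ.2.1 w hW))
  have hstat := hasSum_mul_tsum_indicator_of_stationary hπ.1 hπ.summable
    (kernel_nonneg fun v => (hμ.1 v).le) hP hπ.2.2.2 {w' | k ≤ G.potential I w'}
  have hlow : HasSum
      (fun w => π w * ∑ v, μ v * (if k ≤ G.potential I w + G.charge I v then 1 else 0))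
      (∑ v, μ v * tailMass π (G.potential I) (k - G.charge I v)) := by
    have hterm : ∀ w v, π w * (μ v * (if k ≤ G.potential I w + G.charge I v then 1 else 0)) =
        μ v * {w | k - G.charge I v ≤ G.potential I w}.indicator π w := by
      intro w v
      simp only [Set.indicator_apply, Set.mem_ofPred_eq, sub_le_iff_le_add]
      split_ifs <;> ring
    simp only [Finset.mul_sum, hterm]
    exact hasSum_sum fun v _ =>
      (hπ.summable.indicator {w | k - G.charge I v ≤ G.potential I w}).hasSum.mul_left (μ v)
  refine hasSum_le (fun w => ?_) hlow hstat
  by_cases hw : w ∈ WSpace G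
  · exact mul_le_mul_of_nonneg_left
      (sum_mul_ite_le_tsum_indicator_kernel (fun v => (hμ.1 v).le) hI hw k) (hπ.1 w)
  · simp [hπ.2.1 w hw]

end Multigraph

theorem stab_subset_ncond_general {V : Type*} [Fintype V] [DecidableEq V] (G : Multigraph V)
    (pol : Policy G) (μ : V → ℝ) (hμ : FullSupport μ)
    (hpr : PositiveRecurrent G (kernel G pol μ)) :
    Ncond G μ := by
  obtain ⟨-, π, hπ⟩ := hpr
  refine ⟨hμ, fun I hI => ?_⟩
  by_contra! hmass
  set T := tailMass π (G.potential I)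
  have hcut : ∀ k,
      mass μ I * (T k - T (k + 1)) ≤ mass μ (G.nbhd I) * (T (k + 1) - T (k + 2)) := by
    intro k
    have h := sum_mul_tailMass_le hμ hπ hI (k + 1)
    rw [sum_mul_comp_charge hI μ fun j => T (k + 1 - j), hμ.2] at h
    simp only [sub_zero, add_sub_cancel_right, sub_neg_eq_add, add_assoc, one_add_one_eq_two] at h
    linarith
  have hflat := le_succ_of_monotone_sub_succ
    (monotone_sub_succ_of_mul_le_mul (mass_pos hμ.1 hI.1) hmass
      (tailMass_antitone _ hπ.1 hπ.summable) hcut)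
    (tailMass_nonneg _ hπ.1) (tailMass_le_tsum _ hπ.1 hπ.summable)
  obtain ⟨w, hw⟩ := hπ.exists_pos
  linarith [le_tailMass_sub_tailMass_succ (G.potential I) hπ.1 hπ.summable w,
    hflat (G.potential I w)]

/-- For any connected multigraph `G` and any admissible matching
policy `Φ`, `stab(G,Φ) ⊆ Ncond(G)`: if the buffer-content Markov chain of the model
`(G,Φ,μ)` is positive recurrent, then `μ ∈ Ncond(G)`. -/
theorem stab_subset_ncond {V : Type*} [Fintype V] [DecidableEq V] (G : Multigraph V)
    (hconn : G.Connected) (pol : Policy G) (μ : V → ℝ) (hμ : FullSupport μ)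
    (hpr : PositiveRecurrent G (kernel G pol μ)) :
    Ncond G μ :=
  stab_subset_ncond_general G pol μ hμ hpr
end

section
/- Let G=(V,E) be a connected multigraph, μ a fully supported probability measure on V, and w=w₁…w_q a nonempty word of 𝕎. Then the set of words 𝐰∈𝔹 whose restriction to its letters in V equals w is exactly w₁𝒜₁*w₂𝒜₂*⋯w_q𝒜_q*, where 𝒜_i={ā : a∈V∖E({w₁,…,w_i})}⊆V̄, and its ν-measure equals ∏_{i=1}^{q} μ(w_i)/μ(E({w₁,…,w_i})). -/
open scoped BigOperators

attribute [local instance] Classical.propDecidable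

namespace Multigraph

variable {V : Type*}

section Nu

variable [Fintype V] [DecidableEq V]

/-- The measure `ν` on words over `𝐕 = V ∪ V̄`, the copy `ā` of a letter `a ∈ V`
being encoded as `Sum.inr a`: `ν(𝐰) = ∏_i μ(i)^{|𝐰|_i + |𝐰|_{ī}}`. -/
noncomputable def nu (μ : V → ℝ) (w : List (V ⊕ V)) : ℝ :=
  ∏ i : V, μ i ^ (w.count (Sum.inl i) + w.count (Sum.inr i))

/-- `ν(S)` for a set `S` of words over `𝐕`. -/
noncomputable def nuSet (μ : V → ℝ) (S : Set (List (V ⊕ V))) : ℝ :=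
  ∑' w : S, nu μ (w : List (V ⊕ V))

end Nu
/-- The admissibility condition characterizing the states of the backward detailed
chain: the first letter is non-barred, no two non-barred letters are adjacent, and no
non-barred letter is adjacent to (the original class of) a later barred letter. -/
def BAdmissible (G : Multigraph V) (b : List (V ⊕ V)) : Prop :=
  (∀ h : b ≠ [], ∃ x : V, b.head h = Sum.inl x) ∧
  ∀ i j : Fin b.length, i < j → ∀ x : V, b.get i = Sum.inl x →
    (∀ y : V, b.get j = Sum.inl y → ¬ G.Adj x y) ∧
    ∀ a : V, b.get j = Sum.inr a → ¬ G.Adj x a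

/-- The set `𝔹` of admissible states of the backward detailed chain. -/
def BSet (G : Multigraph V) : Set (List (V ⊕ V)) := {b | BAdmissible G b}
end Multigraph

open Multigraph
/-- The set of words of the form `w₁u¹w₂u²⋯w_qu^q`, where each `u^i` is an arbitrary
(possibly empty) word over the alphabet `A i`. -/
def interleaveSet {V : Type*} (w : List V) (A : Fin w.length → Set (V ⊕ V)) :
    Set (List (V ⊕ V)) :=
  {b | ∃ us : Fin w.length → List (V ⊕ V),
    (∀ i : Fin w.length, ∀ a ∈ us i, a ∈ A i) ∧
    b = ((List.finRange w.length).map fun i => Sum.inl (w.get i) :: us i).flatten}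

/-!
A word of `𝔹` starts with an unbarred letter, so it cuts uniquely into blocks `wᵢ ūⁱ`, each an
unbarred letter followed by a run of barred ones. For a word cut this way, the admissibility
conditions of `𝔹` say that the letters of `w` are pairwise non-adjacent, which holds for
`w ∈ 𝕎`, and that every barred letter of the `i`-th block lies outside `E({w₁,…,wᵢ})`. So the
fiber over `w` is `w₁𝒜₁*⋯w_q𝒜_q*`, parametrized injectively by tuples of words over
`V ∖ E({w₁,…,wᵢ})`. Since `ν` is multiplicative, its sum over the fiber factorizes into geometric
series `∑ₙ μ(V ∖ E({w₁,…,wᵢ}))ⁿ = 1 / μ(E({w₁,…,wᵢ}))`.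
-/

open scoped ENNReal

section Interleave

variable {α β : Type*}

def HeadIsLeft (b : List (α ⊕ β)) : Prop :=
  ∀ h : b ≠ [], ∃ x, b.head h = Sum.inl x

lemma headIsLeft_nil : HeadIsLeft ([] : List (α ⊕ β)) := fun h => absurd rfl h

lemma headIsLeft_cons_inl (x : α) (t : List (α ⊕ β)) :
    HeadIsLeft (Sum.inl x :: t) := fun _ => ⟨x, rfl⟩

lemma HeadIsLeft.exists_eq_inl {y : α ⊕ β} {t : List (α ⊕ β)} (h : HeadIsLeft (y :: t)) :
    ∃ x, y = Sum.inl x :=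
  h (List.cons_ne_nil y t)

lemma exists_map_inr_append (t : List (α ⊕ β)) :
    ∃ (u : List β) (r : List (α ⊕ β)), HeadIsLeft r ∧ t = u.map Sum.inr ++ r := by
  induction t with
  | nil => exact ⟨[], [], headIsLeft_nil, rfl⟩
  | cons y t ih =>
    cases y with
    | inl x => exact ⟨[], _, headIsLeft_cons_inl x t, rfl⟩
    | inr b =>
      obtain ⟨u, r, hr, rfl⟩ := ih
      exact ⟨b :: u, r, hr, rfl⟩

lemma map_inr_append_inj {u v : List β} {r s : List (α ⊕ β)} (hr : HeadIsLeft r)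
    (hs : HeadIsLeft s) (h : u.map Sum.inr ++ r = v.map Sum.inr ++ s) : u = v ∧ r = s := by
  induction u generalizing v with
  | nil =>
    cases v with
    | nil => exact ⟨rfl, h⟩
    | cons b v =>
      subst h
      obtain ⟨x, hx⟩ := hr.exists_eq_inl
      cases hx
  | cons a u ih =>
    cases v with
    | nil =>
      subst h
      obtain ⟨x, hx⟩ := hs.exists_eq_inl
      cases hx
    | cons b v =>
      simp only [List.map_cons, List.cons_append, List.cons.injEq, Sum.inr.injEq] at h
      obtain ⟨rfl, h⟩ := h
      exact (ih h).imp_left (congrArg _)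

def interleaveWord (w : List α) (us : Fin w.length → List β) : List (α ⊕ β) :=
  (List.ofFn fun i => Sum.inl (w.get i) :: (us i).map Sum.inr).flatten

lemma interleaveWord_cons (c : α) (w : List α) (us : Fin (w.length + 1) → List β) :
    interleaveWord (c :: w) us =
      Sum.inl c :: ((us 0).map Sum.inr ++ interleaveWord w fun i => us i.succ) := by
  simp [interleaveWord, List.ofFn_succ]

lemma headIsLeft_interleaveWord (w : List α) (us : Fin w.length → List β) :
    HeadIsLeft (interleaveWord w us) := by
  cases w with
  | nil => exact headIsLeft_nil
  | cons c w => rw [interleaveWord_cons]; exact headIsLeft_cons_inl c _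

@[simp] lemma filterMap_getLeft?_interleaveWord (w : List α) (us : Fin w.length → List β) :
    (interleaveWord w us).filterMap Sum.getLeft? = w := by
  induction w with
  | nil => rfl
  | cons c w ih => simp [interleaveWord_cons, List.filterMap_append, ih]

lemma interleaveWord_injective (w : List α) :
    Function.Injective (interleaveWord (β := β) w) := by
  induction w with
  | nil => exact fun _ _ _ => funext fun i => i.elim0
  | cons c w ih =>
    intro us vs h
    rw [interleaveWord_cons, interleaveWord_cons, List.cons.injEq] at h
    obtain ⟨h0, htail⟩ := map_inr_append_inj (headIsLeft_interleaveWord _ _)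
      (headIsLeft_interleaveWord _ _) h.2
    have hsucc := ih htail
    funext i
    exact Fin.cases h0 (fun j => congrFun hsucc j) i

lemma exists_eq_interleaveWord {w : List α} {b : List (α ⊕ β)}
    (hb : HeadIsLeft b) (hw : b.filterMap Sum.getLeft? = w) :
    ∃ us, b = interleaveWord w us := by
  induction w generalizing b with
  | nil =>
    refine ⟨Fin.elim0, ?_⟩
    cases b with
    | nil => rfl
    | cons y t =>
      obtain ⟨x, rfl⟩ := hb.exists_eq_inl
      simp at hw
  | cons c w ih =>
    cases b with
    | nil => simp at hw
    | cons y t =>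
      obtain ⟨x, rfl⟩ := hb.exists_eq_inl
      obtain ⟨u, r, hr, rfl⟩ := exists_map_inr_append t
      simp only [List.filterMap_cons, Sum.getLeft?_inl, List.filterMap_append,
        List.cons.injEq] at hw
      obtain ⟨rfl, hw⟩ := hw
      obtain ⟨us, rfl⟩ := ih hr (by simpa [Function.comp_def] using hw)
      exact ⟨Fin.cons u us, by simp [interleaveWord_cons]⟩

end Interleave

lemma interleaveSet_inr_eq_range {V : Type*} (w : List V) (S : Fin w.length → Set V) :
    interleaveSet w (fun i => {x | ∃ a, x = Sum.inr a ∧ a ∈ S i}) =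
      Set.range fun f : (∀ i, List (S i)) => interleaveWord w fun i => (f i).map Subtype.val := by
  ext b
  constructor
  · rintro ⟨vs, hvs, rfl⟩
    have hlift : ∀ i, vs i ∈ Set.range (List.map (Sum.inr ∘ Subtype.val : S i → V ⊕ V)) := by
      intro i
      rw [Set.range_list_map]
      intro x hx
      obtain ⟨a, rfl, ha⟩ := hvs i x hx
      exact ⟨⟨a, ha⟩, rfl⟩
    choose f hf using hlift
    refine ⟨f, ?_⟩
    simp [interleaveWord, List.ofFn_eq_map, ← hf]
  · rintro ⟨f, rfl⟩
    refine ⟨fun i => (f i).map (Sum.inr ∘ Subtype.val), fun i x hx => ?_, ?_⟩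
    · obtain ⟨⟨a, ha⟩, -, rfl⟩ := List.mem_map.1 hx
      exact ⟨a, rfl, ha⟩
    · simp [interleaveWord, List.ofFn_eq_map]

namespace Multigraph

variable {V : Type*} (G : Multigraph V)

def CanPrecede (p q : V ⊕ V) : Prop :=
  ∀ x ∈ p.getLeft?, ¬ G.Adj x (Sum.elim id id q)

lemma bAdmissible_iff (b : List (V ⊕ V)) :
    BAdmissible G b ↔ HeadIsLeft b ∧ b.Pairwise G.CanPrecede := by
  have key : ∀ p q : V ⊕ V, G.CanPrecede p q ↔ ∀ x, p = Sum.inl x →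
      (∀ y, q = Sum.inl y → ¬ G.Adj x y) ∧ ∀ a, q = Sum.inr a → ¬ G.Adj x a := by
    rintro (p | p) (q | q) <;> simp [CanPrecede]
  simp only [BAdmissible, List.pairwise_iff_get, key]
  rfl

lemma pairwise_canPrecede_block (c : V) (u : List V) :
    (Sum.inl c :: u.map Sum.inr).Pairwise G.CanPrecede ↔ ∀ a ∈ u, ¬ G.Adj c a := by
  simp [CanPrecede, List.pairwise_map, List.pairwise_of_forall]

lemma forall_canPrecede_blocks (c d : V) (u v : List V) :
    (∀ x ∈ Sum.inl c :: u.map Sum.inr, ∀ y ∈ Sum.inl d :: v.map Sum.inr, G.CanPrecede x y) ↔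
      ¬ G.Adj c d ∧ ∀ a ∈ v, ¬ G.Adj c a := by
  simp [CanPrecede]

lemma pairwise_canPrecede_interleaveWord (w : List V) (us : Fin w.length → List V) :
    (interleaveWord w us).Pairwise G.CanPrecede ↔ w.Pairwise (fun x y => ¬ G.Adj x y) ∧
      ∀ i j : Fin w.length, i ≤ j → ∀ a ∈ us j, ¬ G.Adj (w.get i) a := by
  rw [interleaveWord, List.pairwise_flatten, List.forall_mem_ofFn_iff, List.pairwise_ofFn,
    List.pairwise_iff_get]
  simp only [pairwise_canPrecede_block, forall_canPrecede_blocks]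
  constructor
  · rintro ⟨hblock, hcross⟩
    refine ⟨fun i j hij => (hcross hij).1, fun i j hij => ?_⟩
    rcases hij.lt_or_eq with hij | rfl
    exacts [(hcross hij).2, hblock i]
  · rintro ⟨hw, hus⟩
    exact ⟨fun j => hus j j le_rfl, fun i j hij => ⟨hw i j hij, hus i j hij.le⟩⟩

variable {G}

lemma pairwise_not_adj_of_mem_wSpace [DecidableEq V] {w : List V} (hw : w ∈ WSpace G) :
    w.Pairwise fun x y => ¬ G.Adj x y := by
  rw [List.pairwise_iff_forall_sublist]
  intro x y hxy hadj
  by_cases hx : x = y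
  · subst hx
    have htwice : 2 ≤ w.count x := List.replicate_sublist_iff.1 hxy
    have honce : w.count x ≤ 1 := hw.2 x hadj
    omega
  · rcases hw.1 x y hx hadj with h | h <;> rw [List.count_eq_zero] at h
    exacts [h (hxy.subset (by simp)), h (hxy.subset (by simp))]

lemma mem_nbhd_take_iff {w : List V} (j : Fin w.length) (a : V) :
    a ∈ G.nbhd {c | c ∈ w.take (j + 1)} ↔ ∃ i : Fin w.length, i ≤ j ∧ G.Adj (w.get i) a := by
  simp only [nbhd, List.mem_take_iff_getElem]
  constructor
  · rintro ⟨_, ⟨i, hi, rfl⟩, hadj⟩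
    exact ⟨⟨i, by omega⟩, Fin.mk_le_of_le_val (by omega), hadj⟩
  · rintro ⟨i, hij, hadj⟩
    exact ⟨_, ⟨i, by have := Fin.le_def.1 hij; omega, rfl⟩, hadj⟩

lemma bAdmissible_interleaveWord_iff [DecidableEq V] {w : List V} (hw : w ∈ WSpace G)
    (us : Fin w.length → List V) :
    BAdmissible G (interleaveWord w us) ↔
      ∀ j, ∀ a ∈ us j, a ∉ G.nbhd {c | c ∈ w.take (j + 1)} := by
  simp only [bAdmissible_iff, pairwise_canPrecede_interleaveWord, headIsLeft_interleaveWord,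
    pairwise_not_adj_of_mem_wSpace hw, true_and, mem_nbhd_take_iff, not_exists, not_and]
  exact ⟨fun h j a ha i hij => h i j hij a ha, fun h i j hij a ha => h j a ha i hij⟩

lemma fiber_eq_range [DecidableEq V] {w : List V} (hw : w ∈ WSpace G) :
    {b ∈ BSet G | b.filterMap Sum.getLeft? = w} =
      Set.range fun f : (∀ i : Fin w.length,
          List ((G.nbhd {c | c ∈ w.take (i + 1)})ᶜ : Set V)) =>
        interleaveWord w fun i => (f i).map Subtype.val := by
  ext b
  constructor
  · rintro ⟨hb, hbw⟩
    obtain ⟨us, rfl⟩ := exists_eq_interleaveWord ((bAdmissible_iff G b).1 hb).1 hbw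
    have hlift : ∀ i : Fin w.length, ∃ l : List ((G.nbhd {c | c ∈ w.take (i + 1)})ᶜ : Set V),
        l.map Subtype.val = us i :=
      fun i => CanLift.prf (us i) ((bAdmissible_interleaveWord_iff hw us).1 hb i)
    choose f hf using hlift
    exact ⟨f, congrArg _ (funext hf)⟩
  · rintro ⟨f, rfl⟩
    refine ⟨(bAdmissible_interleaveWord_iff hw _).2 fun i a ha => ?_,
      filterMap_getLeft?_interleaveWord _ _⟩
    obtain ⟨x, -, rfl⟩ := List.mem_map.1 ha
    exact x.2

end Multigraph

namespace ENNReal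

lemma tsum_pi_fin_prod : ∀ {n : ℕ} (β : Fin n → Type*) (g : ∀ i, β i → ℝ≥0∞),
    ∑' f : (∀ i, β i), ∏ i, g i (f i) = ∏ i, ∑' x, g i x
  | 0, β, g => by
    rw [tsum_eq_single (fun i => i.elim0) fun f hf => absurd (Subsingleton.elim f _) hf]
    simp
  | n + 1, β, g => by
    rw [← (Fin.consEquiv β).tsum_eq, Fin.prod_univ_succ]
    simp only [Fin.consEquiv_apply, Fin.prod_univ_succ, Fin.cons_zero, Fin.cons_succ]
    rw [ENNReal.tsum_prod', ← tsum_pi_fin_prod _ fun i => g i.succ]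
    simp only [ENNReal.tsum_mul_left, ENNReal.tsum_mul_right]

lemma tsum_list_prod_map {γ : Type*} (f : γ → ℝ≥0∞) :
    ∑' u : List γ, (u.map f).prod = (1 - ∑' x, f x)⁻¹ := by
  rw [← List.equivSigmaTuple.symm.tsum_eq, ENNReal.tsum_sigma', ← ENNReal.tsum_geometric]
  refine tsum_congr fun n => ?_
  simp only [List.equivSigmaTuple_symm_apply, List.map_ofFn, List.prod_ofFn, Function.comp_apply,
    tsum_pi_fin_prod (fun _ : Fin n => γ) fun _ => f, Finset.prod_const, Finset.card_univ,
    Fintype.card_fin]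

end ENNReal

lemma prod_map_sumElim_interleaveWord {α β M : Type*} [CommMonoid M] (g : α → M) (h : β → M)
    (w : List α) (us : Fin w.length → List β) :
    ((interleaveWord w us).map (Sum.elim g h)).prod = ∏ i, g (w.get i) * ((us i).map h).prod := by
  simp [interleaveWord, List.map_flatten, List.prod_flatten, List.map_ofFn, Function.comp_def,
    List.prod_ofFn]

lemma Sum.beq_eq_decide {α β : Type*} [DecidableEq α] [DecidableEq β] (a b : α ⊕ β) :
    (a == b) = decide (a = b) := by
  cases a <;> cases b <;> simp only [Sum.inl.injEq, Sum.inr.injEq, reduceCtorEq] <;> rfl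

namespace Multigraph

variable {V : Type*} [Fintype V]

lemma mass_nonneg {μ : V → ℝ} (hμ0 : ∀ v, 0 ≤ μ v) (S : Set V) : 0 ≤ mass μ S :=
  Finset.sum_nonneg fun v _ => Set.indicator_nonneg (fun v _ => hμ0 v) v

lemma mass_add_mass_compl (μ : V → ℝ) (S : Set V) : mass μ S + mass μ Sᶜ = ∑ v, μ v := by
  simp only [mass, ← Finset.sum_add_distrib, Set.indicator_self_add_compl_apply]

lemma tsum_subtype_ofReal {μ : V → ℝ} (hμ0 : ∀ v, 0 ≤ μ v) (S : Set V) :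
    ∑' x : S, ENNReal.ofReal (μ x) = ENNReal.ofReal (mass μ S) := by
  rw [tsum_subtype S fun v => ENNReal.ofReal (μ v), tsum_fintype, mass,
    ENNReal.ofReal_sum_of_nonneg fun v _ => Set.indicator_nonneg (fun v _ => hμ0 v) v]
  exact Finset.sum_congr rfl fun v _ => by simp [Set.indicator_apply, apply_ite ENNReal.ofReal]

variable [DecidableEq V]

lemma nu_nil (μ : V → ℝ) : nu μ [] = 1 := by simp [nu]

lemma nu_cons (μ : V → ℝ) (x : V ⊕ V) (b : List (V ⊕ V)) :
    nu μ (x :: b) = Sum.elim μ μ x * nu μ b := by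
  simp only [nu, List.count_cons, Sum.beq_eq_decide, pow_add, Finset.prod_mul_distrib]
  cases x <;>
    simp only [Sum.inl.injEq, Sum.inr.injEq, reduceCtorEq, decide_eq_true_eq, decide_false,
      Bool.false_eq_true, ↓reduceIte, pow_ite, pow_one, pow_zero, Finset.prod_ite_eq,
      Finset.mem_univ, Finset.prod_const_one, mul_one, Sum.elim_inl, Sum.elim_inr] <;>
    ring

lemma ofReal_nu {μ : V → ℝ} (hμ0 : ∀ v, 0 ≤ μ v) (b : List (V ⊕ V)) :
    ENNReal.ofReal (nu μ b) =
      (b.map (Sum.elim (fun v => ENNReal.ofReal (μ v)) fun v => ENNReal.ofReal (μ v))).prod := by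
  induction b with
  | nil => simp [nu_nil]
  | cons x b ih =>
    rw [nu_cons, ENNReal.ofReal_mul (by cases x <;> exact hμ0 _), ih]
    cases x <;> rfl

lemma nuSet_eq_toReal_tsum {μ : V → ℝ} (hμ0 : ∀ v, 0 ≤ μ v) (T : Set (List (V ⊕ V))) :
    nuSet μ T = (∑' b : T, ENNReal.ofReal (nu μ b)).toReal := by
  rw [nuSet, ENNReal.tsum_toReal_eq fun _ => ENNReal.ofReal_ne_top]
  refine tsum_congr fun b => (ENNReal.toReal_ofReal ?_).symm
  exact Finset.prod_nonneg fun v _ => pow_nonneg (hμ0 v) _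

-- In `ℝ≥0∞` a divergent factor (when `mass μ (S i)ᶜ = 0`) is `⊤`, and `toReal ⊤ = 0` matches
-- the real-valued `x / 0 = 0`.
lemma nuSet_range_interleaveWord {μ : V → ℝ} (hμ0 : ∀ v, 0 ≤ μ v) (hμ1 : ∑ v, μ v = 1)
    (w : List V) (S : Fin w.length → Set V) :
    nuSet μ (Set.range fun f : (∀ i, List (S i)) =>
        interleaveWord w fun i => (f i).map Subtype.val) =
      ∏ i, μ (w.get i) / mass μ (S i)ᶜ := by
  set m : V → ℝ≥0∞ := fun v => ENNReal.ofReal (μ v)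
  have hinj : Function.Injective fun f : (∀ i, List (S i)) =>
      interleaveWord w fun i => (f i).map Subtype.val :=
    (interleaveWord_injective w).comp
      (Function.Injective.piMap fun i => List.map_injective_iff.2 Subtype.val_injective)
  have hcompl : ∀ i, 1 - ENNReal.ofReal (mass μ (S i)) = ENNReal.ofReal (mass μ (S i)ᶜ) := by
    intro i
    refine ENNReal.sub_eq_of_eq_add ENNReal.ofReal_ne_top ?_
    rw [← ENNReal.ofReal_add (mass_nonneg hμ0 _) (mass_nonneg hμ0 _), add_comm,
      mass_add_mass_compl, hμ1, ENNReal.ofReal_one]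
  calc _ = (∑' f : (∀ i, List (S i)),
        ∏ i, m (w.get i) * ((f i).map (m ∘ Subtype.val)).prod).toReal := by
        rw [nuSet_eq_toReal_tsum hμ0, tsum_range (fun b => ENNReal.ofReal (nu μ b)) hinj]
        simp only [ofReal_nu hμ0, prod_map_sumElim_interleaveWord, List.map_map]
        rfl
    _ = (∏ i, m (w.get i) * (ENNReal.ofReal (mass μ (S i)ᶜ))⁻¹).toReal := by
        rw [ENNReal.tsum_pi_fin_prod (fun i => List (S i))
          fun i u => m (w.get i) * (u.map (m ∘ Subtype.val)).prod]
        simp only [ENNReal.tsum_mul_left, ENNReal.tsum_list_prod_map, Function.comp_apply, m,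
          tsum_subtype_ofReal hμ0, hcompl]
    _ = ∏ i, μ (w.get i) / mass μ (S i)ᶜ := by
        simp only [ENNReal.toReal_prod, ENNReal.toReal_mul, ENNReal.toReal_inv, m,
          ENNReal.toReal_ofReal (hμ0 _), ENNReal.toReal_ofReal (mass_nonneg hμ0 _), div_eq_mul_inv]

end Multigraph

theorem bset_fiber_interleave_general {V : Type*} [Fintype V] [DecidableEq V]
    (G : Multigraph V) (μ : V → ℝ) (hμ : FullSupport μ)
    (w : List V) (hw : w ∈ WSpace G) :
    {b ∈ BSet G | b.filterMap Sum.getLeft? = w} =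
      interleaveSet w (fun i =>
        {x : V ⊕ V | ∃ a : V, x = Sum.inr a ∧
          a ∉ G.nbhd {c | c ∈ w.take ((i : ℕ) + 1)}}) ∧
    nuSet μ {b ∈ BSet G | b.filterMap Sum.getLeft? = w} =
      ∏ i : Fin w.length,
        μ (w.get i) / mass μ (G.nbhd {c | c ∈ w.take ((i : ℕ) + 1)}) := by
  refine ⟨(fiber_eq_range hw).trans (interleaveSet_inr_eq_range w _).symm, ?_⟩
  rw [fiber_eq_range hw, nuSet_range_interleaveWord (fun v => (hμ.1 v).le) hμ.2]
  simp only [compl_compl]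

/-- For a connected multigraph `G`, a fully supported `μ` and a
nonempty word `w ∈ 𝕎`, the set of words of `𝔹` whose restriction to `V`-letters is
`w` equals `w₁𝒜₁*w₂𝒜₂*⋯w_q𝒜_q*`, with `𝒜_i = {ā : a ∉ E({w₁,…,w_i})}`, and its
`ν`-measure is `∏_i μ(w_i)/μ(E({w₁,…,w_i}))`. -/
theorem bset_fiber_interleave {V : Type*} [Fintype V] [DecidableEq V]
    (G : Multigraph V) (hconn : G.Connected) (μ : V → ℝ) (hμ : FullSupport μ)
    (w : List V) (hw : w ∈ WSpace G) (hne : w ≠ []) :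
    {b ∈ BSet G | b.filterMap Sum.getLeft? = w} =
      interleaveSet w (fun i =>
        {x : V ⊕ V | ∃ a : V, x = Sum.inr a ∧
          a ∉ G.nbhd {c | c ∈ w.take ((i : ℕ) + 1)}}) ∧
    nuSet μ {b ∈ BSet G | b.filterMap Sum.getLeft? = w} =
      ∏ i : Fin w.length,
        μ (w.get i) / mass μ (G.nbhd {c | c ∈ w.take ((i : ℕ) + 1)}) :=
  bset_fiber_interleave_general G μ hμ w hw
end
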